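/- Let L ∈ (0,1), γ ∈ (0,1), δ ≥ 0, ε ≥ 0 with L = γ(1+√(2δ)). If U* and U*_ε are the unique fixed points of the L-contractions R and R_ε respectively (which differ only in that R_ε uses √(Var + ε) instead of √Var), then ‖U* − U*_ε‖∞ ≤ γ√(2δε)/(1 − L). -/

import Mathlib

noncomputable def supNorm {Z : Type*} [Fintype Z] [Nonempty Z] (f : Z → ℝ) : ℝ :=
  ⨆ z, |f z|

noncomputable def vmax {S A : Type*} [Fintype A] [Nonempty A] (U : S × A → ℝ) (s : S) : ℝ :=
  ⨆ a, U (s, a)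

def expect {Ω : Type*} [Fintype Ω] (p : Ω → ℝ) (f : Ω → ℝ) : ℝ :=
  ∑ ω, p ω * f ω

noncomputable def variance {Ω : Type*} [Fintype Ω] (p : Ω → ℝ) (f : Ω → ℝ) : ℝ :=
  expect p (fun ω => f ω ^ 2) - (expect p f) ^ 2

/-- The stabilized approximate robust Bellman operator `R_ε`. -/
noncomputable def Rop {S A : Type*} [Fintype S] [Fintype A] [Nonempty A]
    (P0 : S × A → S → ℝ) (r : S × A → ℝ) (γ δ ε : ℝ) (U : S × A → ℝ) (z : S × A) : ℝ :=
  r z + γ * expect (P0 z) (vmax U)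
    - γ * Real.sqrt (2 * δ) * Real.sqrt (variance (P0 z) (vmax U) + ε)

/-!
`R_ε` is a contraction in the sup norm with constant `L = γ(1 + √(2δ))`: the maximum over actions,
the expectation and `√(Var + ε)` are all 1-Lipschitz, the last one because `√Var` is the
Euclidean norm of the `p`-weighted centred vector and adding `ε` under the root only shrinks
differences. Moreover `R` and `R_ε` are uniformly `γ√(2δ)√ε`-close, since `√(a + ε) ≤ √a + √ε`.
The distance between the fixed points of two such maps is at most `γ√(2δε) / (1 - L)`.
-/

lemma supNorm_eq_norm {Z : Type*} [Fintype Z] [Nonempty Z] (f : Z → ℝ) : supNorm f = ‖f‖ := by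
  have hbdd : BddAbove (Set.range fun z => |f z|) := (Set.finite_range _).bddAbove
  refine le_antisymm (ciSup_le fun z => norm_le_pi_norm f z) ?_
  have hnonneg : 0 ≤ supNorm f :=
    (abs_nonneg _).trans (le_ciSup hbdd (Classical.arbitrary Z))
  exact (pi_norm_le_iff_of_nonneg hnonneg).2 fun z => le_ciSup hbdd z

lemma ciSup_le_ciSup_add {ι : Type*} [Finite ι] [Nonempty ι] {f g : ι → ℝ} {M : ℝ}
    (h : ∀ i, f i ≤ g i + M) : ⨆ i, f i ≤ (⨆ i, g i) + M :=
  ciSup_le fun i => (h i).trans (add_le_add_left (le_ciSup (Set.finite_range g).bddAbove i) M)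

lemma abs_ciSup_sub_ciSup_le {ι : Type*} [Finite ι] [Nonempty ι] {f g : ι → ℝ} {M : ℝ}
    (h : ∀ i, |f i - g i| ≤ M) : |(⨆ i, f i) - ⨆ i, g i| ≤ M := by
  refine abs_sub_le_iff.2 ⟨?_, ?_⟩ <;> rw [sub_le_iff_le_add']
  · exact ciSup_le_ciSup_add fun i => by linarith [(abs_sub_le_iff.1 (h i)).1]
  · exact ciSup_le_ciSup_add fun i => by linarith [(abs_sub_le_iff.1 (h i)).2]

lemma Real.sqrt_add_le_sqrt_add_sqrt (a b : ℝ) : √(a + b) ≤ √a + √b := by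
  rcases le_total 0 a with ha | ha
  · rcases le_total 0 b with hb | hb
    · rw [Real.sqrt_le_left (by positivity), add_sq, Real.sq_sqrt ha, Real.sq_sqrt hb]
      nlinarith [Real.sqrt_nonneg a, Real.sqrt_nonneg b]
    · linarith [Real.sqrt_le_sqrt (by linarith : a + b ≤ a), Real.sqrt_nonneg b]
  · linarith [Real.sqrt_le_sqrt (by linarith : a + b ≤ b), Real.sqrt_nonneg a]

lemma Real.sqrt_add_sub_sqrt_add_le {a b ε : ℝ} (hb : 0 ≤ b) (hba : b ≤ a) (hε : 0 ≤ ε) :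
    √(a + ε) - √(b + ε) ≤ √a - √b := by
  -- after squaring `√(a + ε) + √b ≤ √a + √(b + ε)`, this is `(a + ε) b ≤ a (b + ε)`
  have hcross : √(a + ε) * √b ≤ √a * √(b + ε) := by
    rw [← Real.sqrt_mul (by linarith), ← Real.sqrt_mul (by linarith)]
    exact Real.sqrt_le_sqrt (by nlinarith)
  have hsq : (√(a + ε) + √b) ^ 2 ≤ (√a + √(b + ε)) ^ 2 := by
    rw [add_sq, add_sq, Real.sq_sqrt (by linarith), Real.sq_sqrt hb,
      Real.sq_sqrt (by linarith), Real.sq_sqrt (by linarith)]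
    linarith
  linarith [(pow_le_pow_iff_left₀ (by positivity) (by positivity) two_ne_zero).1 hsq]

lemma Real.abs_sqrt_add_sub_sqrt_add_le {a b ε : ℝ} (ha : 0 ≤ a) (hb : 0 ≤ b) (hε : 0 ≤ ε) :
    |√(a + ε) - √(b + ε)| ≤ |√a - √b| := by
  rcases le_total b a with hba | hab
  · rw [abs_of_nonneg (sub_nonneg.2 (Real.sqrt_le_sqrt (by linarith))),
      abs_of_nonneg (sub_nonneg.2 (Real.sqrt_le_sqrt hba))]
    exact Real.sqrt_add_sub_sqrt_add_le hb hba hε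
  · rw [abs_sub_comm, abs_sub_comm √a,
      abs_of_nonneg (sub_nonneg.2 (Real.sqrt_le_sqrt (by linarith))),
      abs_of_nonneg (sub_nonneg.2 (Real.sqrt_le_sqrt hab))]
    exact Real.sqrt_add_sub_sqrt_add_le ha hab hε

section WeightedMoments

variable {Ω : Type*} [Fintype Ω] {p : Ω → ℝ}

lemma expect_sub (p f g : Ω → ℝ) : expect p (f - g) = expect p f - expect p g := by
  simp only [expect, Pi.sub_apply, mul_sub, Finset.sum_sub_distrib]

lemma expect_le (hp0 : ∀ ω, 0 ≤ p ω) (hp1 : ∑ ω, p ω = 1) {f : Ω → ℝ} {M : ℝ}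
    (h : ∀ ω, f ω ≤ M) : expect p f ≤ M :=
  calc expect p f ≤ ∑ ω, p ω * M :=
        Finset.sum_le_sum fun ω _ => mul_le_mul_of_nonneg_left (h ω) (hp0 ω)
    _ = M := by rw [← Finset.sum_mul, hp1, one_mul]

lemma abs_expect_le_norm (hp0 : ∀ ω, 0 ≤ p ω) (hp1 : ∑ ω, p ω = 1) (f : Ω → ℝ) :
    |expect p f| ≤ ‖f‖ :=
  calc |expect p f| ≤ expect p fun ω => |f ω| := by
        refine (Finset.abs_sum_le_sum_abs _ _).trans_eq (Finset.sum_congr rfl fun ω _ => ?_)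
        rw [abs_mul, abs_of_nonneg (hp0 ω)]
    _ ≤ ‖f‖ := expect_le hp0 hp1 fun ω => norm_le_pi_norm f ω

lemma expect_sq_le_norm_sq (hp0 : ∀ ω, 0 ≤ p ω) (hp1 : ∑ ω, p ω = 1) (f : Ω → ℝ) :
    expect p (fun ω => f ω ^ 2) ≤ ‖f‖ ^ 2 :=
  expect_le hp0 hp1 fun ω => by
    rw [← sq_abs]
    exact pow_le_pow_left₀ (abs_nonneg _) (norm_le_pi_norm f ω) 2

lemma variance_le_expect_sq (p f : Ω → ℝ) : variance p f ≤ expect p (fun ω => f ω ^ 2) :=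
  sub_le_self _ (sq_nonneg _)

/-- `√(variance p f)` is the Euclidean norm of this vector, so it inherits the triangle
inequality. -/
noncomputable def deviation (p f : Ω → ℝ) : EuclideanSpace ℝ Ω :=
  WithLp.toLp 2 fun ω => √(p ω) * (f ω - expect p f)

lemma deviation_sub (p f g : Ω → ℝ) : deviation p f - deviation p g = deviation p (f - g) := by
  ext ω
  simp only [deviation, expect_sub, PiLp.sub_apply, PiLp.toLp_apply, Pi.sub_apply]
  ring

lemma norm_deviation_sq (hp0 : ∀ ω, 0 ≤ p ω) (hp1 : ∑ ω, p ω = 1) (f : Ω → ℝ) :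
    ‖deviation p f‖ ^ 2 = variance p f :=
  calc ‖deviation p f‖ ^ 2 = ∑ ω, (√(p ω) * (f ω - expect p f)) ^ 2 :=
        EuclideanSpace.real_norm_sq_eq _
    _ = ∑ ω, (p ω * f ω ^ 2 - 2 * expect p f * (p ω * f ω) + expect p f ^ 2 * p ω) :=
        Finset.sum_congr rfl fun ω _ => by rw [mul_pow, Real.sq_sqrt (hp0 ω)]; ring
    _ = variance p f := by
        rw [Finset.sum_add_distrib, Finset.sum_sub_distrib, ← Finset.mul_sum, ← Finset.mul_sum, hp1]
        simp only [variance, expect]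
        ring

lemma variance_nonneg (hp0 : ∀ ω, 0 ≤ p ω) (hp1 : ∑ ω, p ω = 1) (f : Ω → ℝ) :
    0 ≤ variance p f :=
  norm_deviation_sq hp0 hp1 f ▸ sq_nonneg _

lemma sqrt_variance_eq_norm_deviation (hp0 : ∀ ω, 0 ≤ p ω) (hp1 : ∑ ω, p ω = 1) (f : Ω → ℝ) :
    √(variance p f) = ‖deviation p f‖ := by
  rw [← norm_deviation_sq hp0 hp1, Real.sqrt_sq (norm_nonneg _)]

lemma abs_sqrt_variance_sub_le_norm (hp0 : ∀ ω, 0 ≤ p ω) (hp1 : ∑ ω, p ω = 1) (f g : Ω → ℝ) :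
    |√(variance p f) - √(variance p g)| ≤ ‖f - g‖ :=
  calc |√(variance p f) - √(variance p g)| = |‖deviation p f‖ - ‖deviation p g‖| := by
        rw [sqrt_variance_eq_norm_deviation hp0 hp1, sqrt_variance_eq_norm_deviation hp0 hp1]
    _ ≤ ‖deviation p f - deviation p g‖ := abs_norm_sub_norm_le _ _
    _ = √(variance p (f - g)) := by rw [deviation_sub, sqrt_variance_eq_norm_deviation hp0 hp1]
    _ ≤ √(‖f - g‖ ^ 2) :=
        Real.sqrt_le_sqrt ((variance_le_expect_sq p _).trans (expect_sq_le_norm_sq hp0 hp1 _))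
    _ = ‖f - g‖ := Real.sqrt_sq (norm_nonneg _)

end WeightedMoments

section RobustBellman

variable {S A : Type*} [Fintype S] [Fintype A] [Nonempty A]

lemma dist_vmax_le (U V : S × A → ℝ) : dist (vmax U) (vmax V) ≤ dist U V :=
  (dist_pi_le_iff dist_nonneg).2 fun s =>
    abs_ciSup_sub_ciSup_le fun a => dist_le_pi_dist U V (s, a)

lemma dist_Rop_le {P0 : S × A → S → ℝ} (hP0 : ∀ z, (∀ s, 0 ≤ P0 z s) ∧ ∑ s, P0 z s = 1)
    (r : S × A → ℝ) {γ : ℝ} (hγ : 0 ≤ γ) (δ : ℝ) {ε : ℝ} (hε : 0 ≤ ε) (U V : S × A → ℝ) :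
    dist (Rop P0 r γ δ ε U) (Rop P0 r γ δ ε V) ≤ γ * (1 + √(2 * δ)) * dist U V := by
  refine (dist_pi_le_iff (by positivity)).2 fun z => ?_
  obtain ⟨hp0, hp1⟩ := hP0 z
  have hv : ‖vmax U - vmax V‖ ≤ dist U V := (dist_eq_norm _ _).symm.trans_le (dist_vmax_le U V)
  have hE : |expect (P0 z) (vmax U) - expect (P0 z) (vmax V)| ≤ dist U V := by
    rw [← expect_sub]
    exact (abs_expect_le_norm hp0 hp1 _).trans hv
  have hσ : |√(variance (P0 z) (vmax U) + ε) - √(variance (P0 z) (vmax V) + ε)| ≤ dist U V :=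
    (Real.abs_sqrt_add_sub_sqrt_add_le (variance_nonneg hp0 hp1 _) (variance_nonneg hp0 hp1 _)
      hε).trans ((abs_sqrt_variance_sub_le_norm hp0 hp1 _ _).trans hv)
  calc dist (Rop P0 r γ δ ε U z) (Rop P0 r γ δ ε V z)
      = |γ * (expect (P0 z) (vmax U) - expect (P0 z) (vmax V))
          - γ * √(2 * δ) * (√(variance (P0 z) (vmax U) + ε)
            - √(variance (P0 z) (vmax V) + ε))| := by
        rw [Real.dist_eq, Rop, Rop]
        congr 1
        ring
    _ ≤ γ * |expect (P0 z) (vmax U) - expect (P0 z) (vmax V)|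
          + γ * √(2 * δ) * |√(variance (P0 z) (vmax U) + ε)
            - √(variance (P0 z) (vmax V) + ε)| := by
        refine (abs_sub _ _).trans_eq ?_
        rw [abs_mul, abs_mul, abs_of_nonneg hγ, abs_of_nonneg (by positivity : 0 ≤ γ * √(2 * δ))]
    _ ≤ γ * dist U V + γ * √(2 * δ) * dist U V := by gcongr
    _ = γ * (1 + √(2 * δ)) * dist U V := by ring

lemma dist_Rop_zero_Rop_le (P0 : S × A → S → ℝ) (r : S × A → ℝ) {γ δ ε : ℝ} (hγ : 0 ≤ γ)
    (hδ : 0 ≤ δ) (hε : 0 ≤ ε) (U : S × A → ℝ) :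
    dist (Rop P0 r γ δ 0 U) (Rop P0 r γ δ ε U) ≤ γ * √(2 * δ * ε) := by
  refine (dist_pi_le_iff (by positivity)).2 fun z => ?_
  obtain ⟨σ2, hσ2⟩ : ∃ σ2, variance (P0 z) (vmax U) = σ2 := ⟨_, rfl⟩
  have hmono : √σ2 ≤ √(σ2 + ε) := Real.sqrt_le_sqrt (by linarith)
  calc dist (Rop P0 r γ δ 0 U z) (Rop P0 r γ δ ε U z)
      = |γ * √(2 * δ) * (√(σ2 + ε) - √σ2)| := by
        rw [Real.dist_eq, Rop, Rop, add_zero, hσ2]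
        congr 1
        ring
    _ = γ * √(2 * δ) * (√(σ2 + ε) - √σ2) :=
        abs_of_nonneg (mul_nonneg (by positivity) (sub_nonneg.2 hmono))
    _ ≤ γ * √(2 * δ) * √ε := by
        gcongr
        linarith [Real.sqrt_add_le_sqrt_add_sqrt σ2 ε]
    _ = γ * √(2 * δ * ε) := by rw [mul_assoc, ← Real.sqrt_mul (by positivity : (0 : ℝ) ≤ 2 * δ)]

end RobustBellman

theorem stmt12 {S A : Type*} [Fintype S] [Nonempty S] [Fintype A] [Nonempty A]
    (P0 : S × A → S → ℝ) (hP0 : ∀ z, (∀ s, 0 ≤ P0 z s) ∧ ∑ s, P0 z s = 1)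
    (r : S × A → ℝ) (γ δ ε : ℝ) (hγ : γ ∈ Set.Ioo (0 : ℝ) 1) (hδ : 0 ≤ δ) (hε : 0 ≤ ε)
    (hL : γ * (1 + Real.sqrt (2 * δ)) < 1)
    (Us Uε : S × A → ℝ)
    (hU : ∀ z, Rop P0 r γ δ 0 Us z = Us z)
    (hUε : ∀ z, Rop P0 r γ δ ε Uε z = Uε z) :
    supNorm (fun z => Us z - Uε z)
      ≤ γ * Real.sqrt (2 * δ * ε) / (1 - γ * (1 + Real.sqrt (2 * δ))) := by
  have hγ0 : 0 ≤ γ := hγ.1.le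
  let L : NNReal := ⟨γ * (1 + √(2 * δ)), by positivity⟩
  have hcontract : ContractingWith L (Rop P0 r γ δ ε) :=
    ⟨hL, LipschitzWith.of_dist_le_mul (dist_Rop_le hP0 r hγ0 δ hε)⟩
  calc supNorm (fun z => Us z - Uε z) = dist Uε Us := by
        rw [supNorm_eq_norm, dist_comm, dist_eq_norm]
        rfl
    _ ≤ γ * √(2 * δ * ε) / (1 - L) :=
        hcontract.dist_fixedPoint_fixedPoint_of_dist_le' _ (funext hUε) (funext hU)
          fun U => (dist_comm _ _).trans_le (dist_Rop_zero_Rop_le P0 r hγ0 hδ hε U)
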